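/- Let A ∈ M_n(ℝ) and let G, H ∈ M_n(ℝ ∪ {-∞}) be tropical monomial matrices commuting with A, each with maximal cycle mean 0. Then the product G ⊗ H has maximal cycle mean 0. -/
import Mathlib


open Finset Matrix

/-- Tropical (max-plus) matrix multiplication over 𝕋 = ℝ ∪ {-∞} = WithBot ℝ. -/
noncomputable def tmulT {n : ℕ} (A B : Matrix (Fin n) (Fin n) (WithBot ℝ)) :
    Matrix (Fin n) (Fin n) (WithBot ℝ) :=
  fun i j => univ.sup (fun k => A i k + B k j)

/-- Embedding of a real matrix into matrices over ℝ ∪ {-∞}. -/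
def emb {n : ℕ} (A : Matrix (Fin n) (Fin n) ℝ) : Matrix (Fin n) (Fin n) (WithBot ℝ) :=
  A.map (fun a => (a : WithBot ℝ))

/-- A tropical monomial (unit) matrix. -/
def IsMonomial {n : ℕ} (G : Matrix (Fin n) (Fin n) (WithBot ℝ)) : Prop :=
  ∃ (σ : Equiv.Perm (Fin n)) (lam : Fin n → ℝ),
    ∀ i j, G i j = if j = σ i then (lam i : WithBot ℝ) else ⊥

/-- Total weight of the cycle c 0 → c 1 → ⋯ → c k → c 0 in the weighted digraph
of a matrix over ℝ ∪ {-∞}. -/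
noncomputable def cycleWeightT {n k : ℕ} (M : Matrix (Fin n) (Fin n) (WithBot ℝ))
    (c : Fin (k + 1) → Fin n) : WithBot ℝ :=
  ∑ i, M (c i) (c (i + 1))

/-- M has maximum cycle mean 0: every cycle has mean weight ≤ 0 (equivalently,
total weight ≤ 0) and some cycle has mean weight 0 (total weight 0). -/
def MaxCycleMeanZero {n : ℕ} (M : Matrix (Fin n) (Fin n) (WithBot ℝ)) : Prop :=
  (∀ (k : ℕ) (c : Fin (k + 1) → Fin n), cycleWeightT M c ≤ 0) ∧
  (∃ (k : ℕ) (c : Fin (k + 1) → Fin n), cycleWeightT M c = 0)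


namespace PMZ

lemma coe_sum {ι : Type*} (s : Finset ι) (f : ι → ℝ) :
    ((∑ i ∈ s, f i : ℝ) : WithBot ℝ) = ∑ i ∈ s, (f i : WithBot ℝ) := by
  classical
  induction s using Finset.cons_induction with
  | empty => simp
  | cons a s ha ih => rw [Finset.sum_cons, Finset.sum_cons, WithBot.coe_add, ih]

lemma sum_bot {ι : Type*} [Fintype ι] [DecidableEq ι] {f : ι → WithBot ℝ} (i : ι) (h : f i = ⊥) :
    ∑ j, f j = ⊥ := by
  rw [← Finset.add_sum_erase _ f (Finset.mem_univ i), h, WithBot.bot_add]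

lemma sup_single {n : ℕ} (f : Fin n → WithBot ℝ) (k₀ : Fin n)
    (h : ∀ k, k ≠ k₀ → f k = ⊥) : Finset.univ.sup f = f k₀ := by
  apply le_antisymm
  · refine Finset.sup_le fun k _ => ?_
    by_cases hk : k = k₀
    · subst hk; exact le_rfl
    · rw [h k hk]; exact bot_le
  · exact Finset.le_sup (Finset.mem_univ k₀)

section Dyn

variable {n : ℕ} (A : Matrix (Fin n) (Fin n) ℝ) (π : Equiv.Perm (Fin n)) (ν : Fin n → ℝ)

lemma iter_rel (hrel : ∀ i j, A (π i) (π j) = A i j + ν j - ν i) :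
    ∀ (m : ℕ) (x y : Fin n),
    A ((π ^ m) x) ((π ^ m) y) + ∑ t ∈ Finset.range m, ν ((π ^ t) x)
      = A x y + ∑ t ∈ Finset.range m, ν ((π ^ t) y) := by
  intro m
  induction m with
  | zero => simp
  | succ m ih =>
    intro x y
    have h1 : (π ^ (m+1)) x = π ((π ^ m) x) := by rw [pow_succ', Equiv.Perm.mul_apply]
    have h2 : (π ^ (m+1)) y = π ((π ^ m) y) := by rw [pow_succ', Equiv.Perm.mul_apply]
    rw [h1, h2, hrel, Finset.sum_range_succ, Finset.sum_range_succ]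
    have := ih x y
    linarith

lemma sum_range_K_eq (hrel : ∀ i j, A (π i) (π j) = A i j + ν j - ν i) (x y : Fin n) :
    ∑ t ∈ Finset.range (orderOf π), ν ((π ^ t) x)
      = ∑ t ∈ Finset.range (orderOf π), ν ((π ^ t) y) := by
  have h := iter_rel A π ν hrel (orderOf π) x y
  rw [pow_orderOf_eq_one] at h
  simp only [Equiv.Perm.one_apply] at h
  linarith

lemma total_eq : ∑ x, ∑ t ∈ Finset.range (orderOf π), ν ((π ^ t) x)
    = (orderOf π : ℝ) * ∑ x, ν x := by
  rw [Finset.sum_comm]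
  have h : ∀ t, ∑ x, ν ((π ^ t) x) = ∑ x, ν x := fun t => Equiv.sum_comp (π ^ t) ν
  simp_rw [h]
  rw [Finset.sum_const, Finset.card_range, nsmul_eq_mul]

lemma S_eq_zero (hrel : ∀ i j, A (π i) (π j) = A i j + ν j - ν i)
    (hn : 0 < n) (hsum : ∑ x, ν x = 0) (x : Fin n) :
    ∑ t ∈ Finset.range (orderOf π), ν ((π ^ t) x) = 0 := by
  have htot := total_eq π ν
  rw [hsum, mul_zero] at htot
  have hconst : ∑ y, ∑ t ∈ Finset.range (orderOf π), ν ((π ^ t) y)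
      = (n : ℝ) * ∑ t ∈ Finset.range (orderOf π), ν ((π ^ t) x) := by
    rw [Finset.sum_congr rfl (fun y _ => sum_range_K_eq A π ν hrel y x),
      Finset.sum_const, Finset.card_univ, Fintype.card_fin, nsmul_eq_mul]
  rw [htot] at hconst
  have hn' : (n : ℝ) ≠ 0 := Nat.cast_ne_zero.mpr hn.ne'
  rcases mul_eq_zero.mp hconst.symm with h | h
  · exact absurd h hn'
  · exact h

lemma periodic_block (x : Fin n) (a b : ℕ) :
    ∑ t ∈ Finset.range (a + b), ν ((π ^ t) x)
      = (∑ t ∈ Finset.range a, ν ((π ^ t) x))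
        + ∑ t ∈ Finset.range b, ν ((π ^ t) ((π ^ a) x)) := by
  rw [Finset.sum_range_add]
  congr 1
  refine Finset.sum_congr rfl fun t _ => ?_
  rw [add_comm a t, pow_add, Equiv.Perm.mul_apply]

lemma fixed_pow (x : Fin n) (m : ℕ) (hx : (π ^ m) x = x) :
    ∀ j, (π ^ (m * j)) x = x := by
  intro j
  induction j with
  | zero => simp
  | succ j ih => rw [Nat.mul_succ, pow_add, Equiv.Perm.mul_apply, hx, ih]

lemma sum_mult (x : Fin n) (m : ℕ) (hx : (π ^ m) x = x) :
    ∀ j, ∑ t ∈ Finset.range (m * j), ν ((π ^ t) x)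
      = (j : ℝ) * ∑ t ∈ Finset.range m, ν ((π ^ t) x) := by
  intro j
  induction j with
  | zero => simp
  | succ j ih =>
    rw [Nat.mul_succ, periodic_block, ih, fixed_pow π x m hx j]
    push_cast
    ring

lemma cycle_sum_zero (hrel : ∀ i j, A (π i) (π j) = A i j + ν j - ν i)
    (hn : 0 < n) (hsum : ∑ x, ν x = 0) (x : Fin n) (m : ℕ) (hx : (π ^ m) x = x) :
    ∑ t ∈ Finset.range m, ν ((π ^ t) x) = 0 := by
  have hK : 0 < orderOf π := orderOf_pos π
  have hxK : (π ^ orderOf π) x = x := by rw [pow_orderOf_eq_one]; rfl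
  have h1 := sum_mult π ν x m hx (orderOf π)
  have h2 := sum_mult π ν x (orderOf π) hxK m
  rw [S_eq_zero A π ν hrel hn hsum x, mul_zero] at h2
  rw [mul_comm m (orderOf π), h2] at h1
  have hK' : (orderOf π : ℝ) ≠ 0 := Nat.cast_ne_zero.mpr hK.ne'
  rcases mul_eq_zero.mp h1.symm with h | h
  · exact absurd h hK'
  · exact h

lemma total_sum_zero (hrel : ∀ i j, A (π i) (π j) = A i j + ν j - ν i)
    (x : Fin n) (m : ℕ) (hm : 0 < m) (hx : (π ^ m) x = x)
    (hz : ∑ t ∈ Finset.range m, ν ((π ^ t) x) = 0) :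
    ∑ y, ν y = 0 := by
  have hK : 0 < orderOf π := orderOf_pos π
  have hxK : (π ^ orderOf π) x = x := by rw [pow_orderOf_eq_one]; rfl
  have h1 := sum_mult π ν x m hx (orderOf π)
  have h2 := sum_mult π ν x (orderOf π) hxK m
  rw [hz, mul_zero] at h1
  rw [mul_comm (orderOf π) m, h1] at h2
  -- 0 = m * S x  ⇒ S x = 0
  have hm' : (m : ℝ) ≠ 0 := Nat.cast_ne_zero.mpr hm.ne'
  have hSx : ∑ t ∈ Finset.range (orderOf π), ν ((π ^ t) x) = 0 := by
    rcases mul_eq_zero.mp h2.symm with h | h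
    · exact absurd h hm'
    · exact h
  have htot := total_eq π ν
  have hconst : ∑ y, ∑ t ∈ Finset.range (orderOf π), ν ((π ^ t) y) = 0 := by
    rw [Finset.sum_congr rfl (fun y _ => sum_range_K_eq A π ν hrel y x)]
    simp [hSx]
  rw [hconst] at htot
  have hK' : (orderOf π : ℝ) ≠ 0 := Nat.cast_ne_zero.mpr hK.ne'
  rcases mul_eq_zero.mp htot.symm with h | h
  · exact absurd h hK'
  · exact h

end Dyn



section Mat
variable {n : ℕ}

lemma rel_of_comm (A : Matrix (Fin n) (Fin n) ℝ) (σ : Equiv.Perm (Fin n)) (lam : Fin n → ℝ)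
    (G : Matrix (Fin n) (Fin n) (WithBot ℝ))
    (hG : ∀ i j, G i j = if j = σ i then (lam i : WithBot ℝ) else ⊥)
    (hc : tmulT G (emb A) = tmulT (emb A) G) :
    ∀ i j, A (σ i) (σ j) = A i j + lam j - lam i := by
  intro i j
  have h := congrFun (congrFun hc i) (σ j)
  have hL : tmulT G (emb A) i (σ j) = ((lam i + A (σ i) (σ j) : ℝ) : WithBot ℝ) := by
    show Finset.univ.sup (fun k => G i k + emb A k (σ j)) = _
    rw [sup_single _ (σ i) (fun k hk => by rw [hG]; simp [hk])]
    rw [hG]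
    simp [emb]
  have hR : tmulT (emb A) G i (σ j) = ((A i j + lam j : ℝ) : WithBot ℝ) := by
    show Finset.univ.sup (fun k => emb A i k + G k (σ j)) = _
    rw [sup_single _ j (fun k hk => ?_)]
    · rw [hG]
      simp [emb]
    · rw [hG]
      have hne : σ j ≠ σ k := fun hs => hk (σ.injective hs).symm
      simp [hne, emb]
  rw [hL, hR] at h
  have h2 : lam i + A (σ i) (σ j) = A i j + lam j := WithBot.coe_injective h
  linarith

lemma prod_apply (G H : Matrix (Fin n) (Fin n) (WithBot ℝ)) (σ τ : Equiv.Perm (Fin n))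
    (lam mu : Fin n → ℝ)
    (hG : ∀ i j, G i j = if j = σ i then (lam i : WithBot ℝ) else ⊥)
    (hH : ∀ i j, H i j = if j = τ i then (mu i : WithBot ℝ) else ⊥) :
    ∀ i j, tmulT G H i j
      = if j = τ (σ i) then ((lam i + mu (σ i) : ℝ) : WithBot ℝ) else ⊥ := by
  intro i j
  show Finset.univ.sup (fun k => G i k + H k j) = _
  rw [sup_single _ (σ i) (fun k hk => by rw [hG]; simp [hk])]
  rw [hG, hH]
  simp only [if_pos rfl]
  by_cases hj : j = τ (σ i)
  · simp [hj]
  · simp [hj]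

variable (M : Matrix (Fin n) (Fin n) (WithBot ℝ)) (p : Equiv.Perm (Fin n)) (w : Fin n → ℝ)

lemma cycle_bot (hM : ∀ i j, M i j = if j = p i then (w i : WithBot ℝ) else ⊥)
    {k : ℕ} (c : Fin (k+1) → Fin n) (t : Fin (k+1)) (ht : c (t+1) ≠ p (c t)) :
    cycleWeightT M c = ⊥ := by
  apply sum_bot t
  rw [hM]
  simp [ht]

lemma cycle_follow_key {k : ℕ} (c : Fin (k+1) → Fin n)
    (hc : ∀ t, c (t + 1) = p (c t)) :
    ∀ (m : ℕ) (hm : m < k + 1), c ⟨m, hm⟩ = (p ^ m) (c 0) := by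
  intro m
  induction m with
  | zero =>
    intro hm
    have : (⟨0, hm⟩ : Fin (k+1)) = 0 := rfl
    rw [this]
    simp
  | succ m ih =>
    intro hm
    have hm' : m < k + 1 := Nat.lt_of_succ_lt hm
    have e : (⟨m, hm'⟩ : Fin (k+1)) + 1 = ⟨m+1, hm⟩ := by
      apply Fin.ext
      rw [Fin.add_def]
      show (m + (1 % (k+1))) % (k+1) = m + 1
      have h1 : 1 % (k+1) = 1 := Nat.mod_eq_of_lt (by omega)
      rw [h1, Nat.mod_eq_of_lt hm]
    rw [← e, hc, ih hm', pow_succ', Equiv.Perm.mul_apply]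

lemma cycle_follow_fix {k : ℕ} (c : Fin (k+1) → Fin n)
    (hc : ∀ t, c (t + 1) = p (c t)) :
    (p ^ (k + 1)) (c 0) = c 0 := by
  have hlast := hc (Fin.last k)
  rw [Fin.last_add_one] at hlast
  have hk := cycle_follow_key p c hc k (Nat.lt_succ_self k)
  have : Fin.last k = ⟨k, Nat.lt_succ_self k⟩ := rfl
  rw [this, hk] at hlast
  rw [pow_succ', Equiv.Perm.mul_apply, ← hlast]

lemma cycle_weight_follow (hM : ∀ i j, M i j = if j = p i then (w i : WithBot ℝ) else ⊥)
    {k : ℕ} (c : Fin (k+1) → Fin n) (hc : ∀ t, c (t + 1) = p (c t)) :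
    cycleWeightT M c
      = ((∑ t ∈ Finset.range (k+1), w ((p ^ t) (c 0)) : ℝ) : WithBot ℝ) := by
  unfold cycleWeightT
  have h1 : ∀ t : Fin (k+1), M (c t) (c (t+1)) = (w (c t) : WithBot ℝ) := by
    intro t
    rw [hM, if_pos (hc t)]
  rw [Finset.sum_congr rfl (fun t _ => h1 t), coe_sum]
  rw [← Fin.sum_univ_eq_sum_range (fun t => ((w ((p ^ t) (c 0)) : ℝ) : WithBot ℝ)) (k+1)]
  refine Finset.sum_congr rfl fun t _ => ?_
  congr 1
  have : c t = (p ^ (t : ℕ)) (c 0) := by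
    have := cycle_follow_key p c hc t.val t.isLt
    simpa using this
  rw [this]

end Mat
end PMZ


open PMZ

/-- Let A ∈ M_n(ℝ) and G, H tropical monomial matrices commuting with A, each
with maximal cycle mean 0. Then the product G ⊗ H has maximal cycle mean 0. -/
theorem product_max_cycle_mean_zero {n : ℕ}
    (A : Matrix (Fin n) (Fin n) ℝ)
    (G H : Matrix (Fin n) (Fin n) (WithBot ℝ))
    (hG : IsMonomial G) (hH : IsMonomial H)
    (hGA : tmulT G (emb A) = tmulT (emb A) G)
    (hHA : tmulT H (emb A) = tmulT (emb A) H)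
    (hGm : MaxCycleMeanZero G) (hHm : MaxCycleMeanZero H) :
    MaxCycleMeanZero (tmulT G H) := by
  obtain ⟨σ, lam, hGf⟩ := hG
  obtain ⟨τ, mu, hHf⟩ := hH
  have hrelσ := rel_of_comm A σ lam G hGf hGA
  have hrelτ := rel_of_comm A τ mu H hHf hHA
  -- extract zero cycle info for G
  obtain ⟨k₁, c₁, hc₁⟩ := hGm.2
  obtain ⟨k₂, c₂, hc₂⟩ := hHm.2
  have hn : 0 < n := (c₁ 0).pos
  have hfol₁ : ∀ t, c₁ (t + 1) = σ (c₁ t) := by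
    by_contra hcon
    push_neg at hcon
    obtain ⟨t, ht⟩ := hcon
    rw [cycle_bot G σ lam hGf c₁ t ht] at hc₁
    exact absurd hc₁ (by simp)
  have hfol₂ : ∀ t, c₂ (t + 1) = τ (c₂ t) := by
    by_contra hcon
    push_neg at hcon
    obtain ⟨t, ht⟩ := hcon
    rw [cycle_bot H τ mu hHf c₂ t ht] at hc₂
    exact absurd hc₂ (by simp)
  have hz₁ : ∑ t ∈ Finset.range (k₁+1), lam ((σ ^ t) (c₁ 0)) = 0 := by
    rw [cycle_weight_follow G σ lam hGf c₁ hfol₁] at hc₁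
    exact_mod_cast hc₁
  have hz₂ : ∑ t ∈ Finset.range (k₂+1), mu ((τ ^ t) (c₂ 0)) = 0 := by
    rw [cycle_weight_follow H τ mu hHf c₂ hfol₂] at hc₂
    exact_mod_cast hc₂
  have hsumlam : ∑ y, lam y = 0 :=
    total_sum_zero A σ lam hrelσ (c₁ 0) (k₁+1) (Nat.succ_pos k₁)
      (cycle_follow_fix σ c₁ hfol₁) hz₁
  have hsummu : ∑ y, mu y = 0 :=
    total_sum_zero A τ mu hrelτ (c₂ 0) (k₂+1) (Nat.succ_pos k₂)
      (cycle_follow_fix τ c₂ hfol₂) hz₂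
  -- the product data
  set π : Equiv.Perm (Fin n) := τ * σ with hπ
  set ν : Fin n → ℝ := fun i => lam i + mu (σ i) with hν
  have hrelπ : ∀ i j, A (π i) (π j) = A i j + ν j - ν i := by
    intro i j
    show A (τ (σ i)) (τ (σ j)) = _
    rw [hrelτ (σ i) (σ j), hrelσ i j]
    simp [hν]
    ring
  have hsumν : ∑ i, ν i = 0 := by
    have : ∑ i, ν i = (∑ i, lam i) + ∑ i, mu (σ i) := Finset.sum_add_distrib
    rw [this, hsumlam, Equiv.sum_comp σ mu, hsummu, add_zero]
  have hMf : ∀ i j, tmulT G H i j = if j = π i then (ν i : WithBot ℝ) else ⊥ := by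
    intro i j
    rw [prod_apply G H σ τ lam mu hGf hHf i j]
    rfl
  constructor
  · -- every cycle ≤ 0
    intro k c
    by_cases hfol : ∀ t, c (t + 1) = π (c t)
    · rw [cycle_weight_follow (tmulT G H) π ν hMf c hfol,
        cycle_sum_zero A π ν hrelπ hn hsumν (c 0) (k+1) (cycle_follow_fix π c hfol)]
      simp
    · push_neg at hfol
      obtain ⟨t, ht⟩ := hfol
      rw [cycle_bot (tmulT G H) π ν hMf c t ht]
      exact bot_le
  · -- existence of a zero cycle
    have hK : 0 < orderOf π := orderOf_pos π
    refine ⟨orderOf π - 1, fun t => (π ^ (t : ℕ)) (c₁ 0), ?_⟩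
    have hKe : orderOf π - 1 + 1 = orderOf π := Nat.succ_pred_eq_of_pos hK
    have hfol : ∀ t : Fin (orderOf π - 1 + 1),
        (π ^ (((t + 1 : Fin (orderOf π - 1 + 1))) : ℕ)) (c₁ 0)
          = π ((π ^ (t : ℕ)) (c₁ 0)) := by
      intro t
      have hvt : (t : ℕ) < orderOf π := lt_of_lt_of_le t.isLt (le_of_eq hKe)
      have hv : ((t + 1 : Fin (orderOf π - 1 + 1)) : ℕ) = ((t : ℕ) + 1) % orderOf π := by
        rw [Fin.add_def]
        show ((t : ℕ) + 1 % (orderOf π - 1 + 1)) % (orderOf π - 1 + 1) = _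
        generalize hgen : ((t : ℕ)) = a at hvt ⊢
        rw [hKe]
        conv_rhs => rw [Nat.add_mod]
        rw [Nat.mod_eq_of_lt hvt]
      rw [hv]
      have : π ^ (((t : ℕ) + 1) % orderOf π) = π ^ ((t : ℕ) + 1) := pow_mod_orderOf π _
      rw [this, pow_succ', Equiv.Perm.mul_apply]
    rw [cycle_weight_follow (tmulT G H) π ν hMf _ hfol]
    have h0 : (π ^ ((0 : Fin (orderOf π - 1 + 1)) : ℕ)) (c₁ 0) = c₁ 0 := by simp
    rw [h0, hKe,
      cycle_sum_zero A π ν hrelπ hn hsumν (c₁ 0) (orderOf π)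
        (by rw [pow_orderOf_eq_one]; rfl)]
    simp
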